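/- arXiv:1603.09289 — 4 statements merged into one kernel-verified Lean document; each statement's English description precedes it below -/
import Mathlib

section
/- If a sequence of real numbers (r_n) converges classically to a real number r, then the s-limit of the sign expansions of the r_n equals the sign expansion of r + ε for some ε ∈ {0, 1/ω, −1/ω}; equivalently, lim r_n = slim r_n + ε in the surreals with ε infinitesimal of this form. -/
open scoped Classical

noncomputable def slim {L M A : Type*} [LinearOrder L] [LinearOrder M]
    (a : L → M → Option A) : M → Option A := fun m =>
  if h : ∃ l0 : L, ∀ m' ≤ m, ∀ l, l0 ≤ l → ∀ l', l0 ≤ l' →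
      a l m' = a l' m' ∧ (a l m').isSome
  then a h.choose m else none

noncomputable def slimIio {A : Type*} (α : Ordinal) (s : Ordinal → Ordinal → Option A) :
    Ordinal → Option A :=
  slim (L := Set.Iio α) (fun β => s β.1)

abbrev SignStr := Ordinal → Option Bool

def signVal : Option Bool → ℕ
  | none => 1
  | some false => 0
  | some true => 2

def strLT (s t : SignStr) : Prop :=
  ∃ γ, (∀ β < γ, s β = t β) ∧ signVal (s γ) < signVal (t γ)

def strLE (s t : SignStr) : Prop := s = t ∨ strLT s t

noncomputable def ordStr (α : Ordinal) : SignStr := fun γ => if γ < α then some true else none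

noncomputable def strLength {A : Type*} (a : Ordinal → Option A) : Ordinal :=
  sInf {γ | a γ = none}

noncomputable def strAppend {A : Type*} (a b : Ordinal → Option A) : Ordinal → Option A :=
  fun γ => if γ < strLength a then a γ else b (γ - strLength a)

noncomputable def oneOverOmega : SignStr := fun γ =>
  if γ = 0 then some true else if γ < Ordinal.omega0 then some false else none

noncomputable def negOneOverOmega : SignStr := fun γ =>
  if γ = 0 then some false else if γ < Ordinal.omega0 then some true else none

def IsDyadic (x : ℝ) : Prop := ∃ (k : ℤ) (m : ℕ), x = k / 2 ^ m

noncomputable def cand : Option ℝ × Option ℝ → ℝ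
  | (none, none) => 0
  | (some l, none) => l + 1
  | (none, some u) => u - 1
  | (some l, some u) => (l + u) / 2

noncomputable def signState (r : ℝ) : ℕ → Option ℝ × Option ℝ
  | 0 => (none, none)
  | n + 1 =>
      let st := signState r n
      let c := cand st
      if c < r then (some c, st.2)
      else if r < c then (st.1, some c)
      else st

noncomputable def signAt (r : ℝ) (n : ℕ) : Option Bool :=
  let c := cand (signState r n)
  if c < r then some true else if r < c then some false else none

noncomputable def signExp (r : ℝ) : SignStr := fun γ =>
  if h : ∃ n : ℕ, γ = (n : Ordinal) then signAt r h.choose else none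

/-!
The first `n` signs of the expansion of `y` are determined by the side of each of the first `n`
candidates on which `y` lies. Away from the candidates this is locally constant, so along
`r n → x` every sign of `x` that precedes its first blank is eventually reproduced. If `x` is
dyadic with expansion of length `N`, its `N`-th candidate is `x` itself: when `r n > x`
eventually, the later candidates of `r n` approach `x` from above, so the expansions of `r n`
eventually begin with that of `x` followed by `+` and arbitrarily many `-`; the case `r n < x`
follows by the symmetry `y ↦ -y`, which flips every sign. When `r n` is frequently on both sides
of `x`, the `N`-th sign never stabilises and the s-limit is the expansion of `x`.
-/

open Filter Topology
open scoped Ordinal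

section Slim

variable {L M A : Type*} [LinearOrder L] [LinearOrder M] {a : L → M → Option A} {m : M}

theorem slim_apply_of_eventually [Nonempty L] {b : M → Option A}
    (h : ∀ᶠ l in atTop, ∀ m' ≤ m, a l m' = b m') (hb : ∀ m' ≤ m, b m' ≠ none) :
    slim a m = b m := by
  obtain ⟨l₀, hl₀⟩ := eventually_atTop.1 h
  have hex : ∃ l₀ : L, ∀ m' ≤ m, ∀ l, l₀ ≤ l → ∀ l', l₀ ≤ l' →
      a l m' = a l' m' ∧ (a l m').isSome := by
    refine ⟨l₀, fun m' hm' l hl l' hl' => ?_⟩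
    rw [hl₀ l hl m' hm', hl₀ l' hl' m' hm', Option.isSome_iff_ne_none]
    exact ⟨rfl, hb m' hm'⟩
  simp only [slim, dif_pos hex]
  calc a hex.choose m = a (max hex.choose l₀) m :=
        (hex.choose_spec m le_rfl _ le_rfl _ (le_max_left _ _)).1
    _ = b m := hl₀ _ (le_max_right _ _) m le_rfl

theorem slim_apply_eq_none {m' : M} (hm' : m' ≤ m)
    (h : ∀ v, ¬∀ᶠ l in atTop, a l m' = some v) : slim a m = none := by
  refine dif_neg fun ⟨l₀, hl₀⟩ => ?_
  obtain ⟨v, hv⟩ := Option.isSome_iff_exists.1 (hl₀ m' hm' l₀ le_rfl l₀ le_rfl).2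
  refine h v ((eventually_ge_atTop l₀).mono fun l hl => ?_)
  rw [(hl₀ m' hm' l hl l₀ le_rfl).1, hv]

end Slim

section Strings

variable {A B : Type*} {a b : Ordinal → Option A} {γ : Ordinal}

theorem ne_none_of_lt_strLength (h : γ < strLength a) : a γ ≠ none :=
  notMem_of_lt_csInf' (s := {γ | a γ = none}) h

theorem strAppend_apply_of_lt (h : γ < strLength a) : strAppend a b γ = a γ :=
  if_pos h

theorem strAppend_apply_add (a b : Ordinal → Option A) (β : Ordinal) :
    strAppend a b (strLength a + β) = b β := by
  simp [strAppend, Ordinal.add_sub_cancel]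

theorem strAppend_apply_of_omega0_le (ha : strLength a < ω) (hγ : ω ≤ γ) :
    strAppend a b γ = b γ := by
  obtain ⟨N, hN⟩ := Ordinal.lt_omega0.1 ha
  conv_lhs => rw [← Ordinal.natCast_add_of_omega0_le hγ N, ← hN, strAppend_apply_add]

theorem strAppend_apply_ne_none (hb : b (γ - strLength a) ≠ none) : strAppend a b γ ≠ none := by
  unfold strAppend
  split_ifs with h
  exacts [ne_none_of_lt_strLength h, hb]

theorem strLength_map (f : A → B) (a : Ordinal → Option A) :
    strLength (fun γ => (a γ).map f) = strLength a := by
  simp [strLength]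

theorem strAppend_map (f : A → B) (a b : Ordinal → Option A) (γ : Ordinal) :
    strAppend (fun γ => (a γ).map f) (fun γ => (b γ).map f) γ = (strAppend a b γ).map f := by
  simp only [strAppend, strLength_map]
  split_ifs <;> rfl

theorem oneOverOmega_zero : oneOverOmega 0 = some true := by
  simp [oneOverOmega]

theorem oneOverOmega_natCast_succ (j : ℕ) :
    oneOverOmega ((j + 1 : ℕ) : Ordinal) = some false := by
  rw [oneOverOmega, if_neg (mod_cast j.succ_ne_zero), if_pos (Ordinal.natCast_lt_omega0 _)]

theorem oneOverOmega_ne_none (h : γ < ω) : oneOverOmega γ ≠ none := by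
  unfold oneOverOmega
  split_ifs <;> simp

theorem oneOverOmega_of_omega0_le (h : ω ≤ γ) : oneOverOmega γ = none := by
  simp [oneOverOmega, (Ordinal.omega0_pos.trans_le h).ne', h.not_gt]

theorem negOneOverOmega_ne_none (h : γ < ω) : negOneOverOmega γ ≠ none := by
  unfold negOneOverOmega
  split_ifs <;> simp

theorem negOneOverOmega_of_omega0_le (h : ω ≤ γ) : negOneOverOmega γ = none := by
  simp [negOneOverOmega, (Ordinal.omega0_pos.trans_le h).ne', h.not_gt]

theorem negOneOverOmega_eq_map : negOneOverOmega = fun γ => (oneOverOmega γ).map not := by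
  funext γ
  unfold negOneOverOmega oneOverOmega
  split_ifs <;> rfl

end Strings

section SignExpansion

variable {y : ℝ} {n N : ℕ}

theorem signAt_eq_some_true_iff : signAt y n = some true ↔ cand (signState y n) < y := by
  simp only [signAt]
  split_ifs <;> simp_all

theorem signAt_eq_some_false_iff : signAt y n = some false ↔ y < cand (signState y n) := by
  simp only [signAt]
  split_ifs with h₁ h₂
  · simp [h₁.not_gt]
  · simp [h₂]
  · simp [h₂]

theorem signAt_eq_none_iff : signAt y n = none ↔ cand (signState y n) = y := by
  simp only [signAt]
  split_ifs with h₁ h₂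
  · simp [h₁.ne]
  · simp [h₂.ne']
  · simpa using le_antisymm (not_lt.1 h₂) (not_lt.1 h₁)

theorem signState_succ_of_cand_lt (h : cand (signState y n) < y) :
    signState y (n + 1) = (some (cand (signState y n)), (signState y n).2) := by
  simp [signState, h]

theorem signState_succ_of_lt_cand (h : y < cand (signState y n)) :
    signState y (n + 1) = ((signState y n).1, some (cand (signState y n))) := by
  simp [signState, h, h.not_gt]

theorem signState_succ_of_cand_eq (h : cand (signState y n) = y) :
    signState y (n + 1) = signState y n := by
  simp [signState, h]

theorem lt_of_signState_snd_eq_some {u : ℝ} (h : (signState y n).2 = some u) : y < u := by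
  induction n with
  | zero => simp [signState] at h
  | succ n ih =>
    rcases lt_trichotomy (cand (signState y n)) y with hlt | heq | hgt
    · exact ih (by rwa [signState_succ_of_cand_lt hlt] at h)
    · exact ih (by rwa [signState_succ_of_cand_eq heq] at h)
    · rw [signState_succ_of_lt_cand hgt, Option.some_inj] at h
      exact h ▸ hgt

theorem signAt_eq_none_of_le (hN : signAt y N = none) (hn : N ≤ n) : signAt y n = none := by
  induction n, hn using Nat.le_induction with
  | base => exact hN
  | succ n _ ih =>
    rw [signAt_eq_none_iff] at ih ⊢
    rwa [signState_succ_of_cand_eq ih]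

theorem signExp_natCast (y : ℝ) (n : ℕ) : signExp y n = signAt y n := by
  have h : ∃ m : ℕ, (n : Ordinal) = m := ⟨n, rfl⟩
  rw [signExp, dif_pos h, ← Nat.cast_injective h.choose_spec]

theorem signExp_of_omega0_le {γ : Ordinal} (h : ω ≤ γ) : signExp y γ = none := by
  refine dif_neg ?_
  rintro ⟨n, rfl⟩
  exact h.not_gt (Ordinal.natCast_lt_omega0 n)

theorem signExp_eq_none_of_le (hN : signAt y N = none) {γ : Ordinal} (hγ : N ≤ γ) :
    signExp y γ = none := by
  rcases lt_or_ge γ ω with hγω | hγω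
  · obtain ⟨n, rfl⟩ := Ordinal.lt_omega0.1 hγω
    rw [signExp_natCast]
    exact signAt_eq_none_of_le hN (Nat.cast_le.1 hγ)
  · exact signExp_of_omega0_le hγω

theorem strLength_signExp_of_isLeast (hN : IsLeast {n | signAt y n = none} N) :
    strLength (signExp y) = N := by
  have hmem : (N : Ordinal) ∈ {γ | signExp y γ = none} := signExp_eq_none_of_le hN.1 le_rfl
  refine le_antisymm (csInf_le' hmem) (le_csInf ⟨N, hmem⟩ fun γ hγ => ?_)
  by_contra! hlt
  obtain ⟨k, rfl⟩ := Ordinal.lt_omega0.1 (hlt.trans (Ordinal.natCast_lt_omega0 N))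
  exact (Nat.cast_lt.1 hlt).not_ge (hN.2 ((signExp_natCast y k).symm.trans hγ))

end SignExpansion

theorem eventually_lt_iff_and_lt_iff {α : Type*} [LinearOrder α] [TopologicalSpace α]
    [OrderClosedTopology α] {a c : α} (h : c ≠ a) :
    ∀ᶠ b in 𝓝 a, (c < b ↔ c < a) ∧ (b < c ↔ a < c) := by
  rcases h.lt_or_gt with h | h
  · filter_upwards [eventually_gt_nhds h] with b hb
    exact ⟨iff_of_true hb h, iff_of_false hb.not_gt h.not_gt⟩
  · filter_upwards [eventually_lt_nhds h] with b hb
    exact ⟨iff_of_false hb.not_gt h.not_gt, iff_of_true hb h⟩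

section SignExpansionNhds

variable {x y : ℝ} {n N : ℕ}

theorem signState_succ_eq_of_signState_eq (hst : signState y n = signState x n)
    (hlt : cand (signState x n) < y ↔ cand (signState x n) < x)
    (hgt : y < cand (signState x n) ↔ x < cand (signState x n)) :
    signState y (n + 1) = signState x (n + 1) ∧ signAt y n = signAt x n := by
  simp [signState, signAt, hst, hlt, hgt]

theorem eventually_signState_eq (m : ℕ) (h : ∀ k < m, signAt x k ≠ none) :
    ∀ᶠ y in 𝓝 x, signState y m = signState x m ∧ ∀ k < m, signAt y k = signAt x k := by
  induction m with
  | zero => simp [signState]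
  | succ m ih =>
    have hm : cand (signState x m) ≠ x := fun h' =>
      h m m.lt_succ_self (signAt_eq_none_iff.2 h')
    filter_upwards [ih fun k hk => h k (hk.trans m.lt_succ_self),
      eventually_lt_iff_and_lt_iff hm] with y ⟨hst, hsign⟩ ⟨hlt, hgt⟩
    obtain ⟨hst', hsign'⟩ := signState_succ_eq_of_signState_eq hst hlt hgt
    refine ⟨hst', fun k hk => ?_⟩
    rcases Nat.lt_succ_iff_lt_or_eq.1 hk with hk | rfl
    exacts [hsign k hk, hsign']

theorem eventually_signAt_eq (h : ∀ k ≤ n, signAt x k ≠ none) :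
    ∀ᶠ y in 𝓝 x, signAt y n = signAt x n :=
  (eventually_signState_eq (n + 1) fun k hk => h k (Nat.lt_succ_iff.1 hk)).mono
    fun _ hy => hy.2 n n.lt_succ_self

theorem eventually_signState_eq_of_isLeast (hN : IsLeast {n | signAt x n = none} N) :
    ∀ᶠ y in 𝓝 x, signState y N = signState x N :=
  (eventually_signState_eq N fun _ hk h => hk.not_ge (hN.2 h)).mono fun _ hy => hy.1

theorem eventually_signAt_eq_some_iff_of_isLeast (hN : IsLeast {n | signAt x n = none} N) :
    ∀ᶠ y in 𝓝 x, (signAt y N = some true ↔ x < y) ∧ (signAt y N = some false ↔ y < x) := by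
  filter_upwards [eventually_signState_eq_of_isLeast hN] with y hy
  rw [signAt_eq_some_true_iff, signAt_eq_some_false_iff, hy, signAt_eq_none_iff.1 hN.1]
  exact ⟨Iff.rfl, Iff.rfl⟩

theorem exists_eventually_signState_nhdsGT (hN : IsLeast {n | signAt x n = none} N) (j : ℕ) :
    ∃ st : Option ℝ × Option ℝ, st.1 = some x ∧ x < cand st ∧
      ∀ᶠ y in 𝓝[>] x, signState y (N + j + 1) = st := by
  induction j with
  | zero =>
    refine ⟨(some x, (signState x N).2), rfl, ?_, ?_⟩
    · rcases hu : (signState x N).2 with _ | u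
      · simp [cand]
      · have := lt_of_signState_snd_eq_some hu
        simp only [cand]
        linarith
    · filter_upwards [nhdsWithin_le_nhds (eventually_signState_eq_of_isLeast hN),
        self_mem_nhdsWithin] with y hst (hy : x < y)
      have hc : cand (signState y N) = x := hst ▸ signAt_eq_none_iff.1 hN.1
      rw [Nat.add_zero, signState_succ_of_cand_lt (hc ▸ hy), hc, hst]
  | succ j ih =>
    obtain ⟨st, hst, hlt, hev⟩ := ih
    refine ⟨(some x, some (cand st)), rfl, ?_, ?_⟩
    · show x < (x + cand st) / 2
      linarith
    · filter_upwards [hev, nhdsWithin_le_nhds (eventually_lt_nhds hlt)] with y hy hyc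
      rw [show N + (j + 1) + 1 = N + j + 1 + 1 from rfl,
        signState_succ_of_lt_cand (hy ▸ hyc), hy, hst]

theorem eventually_signAt_nhdsGT (hN : IsLeast {n | signAt x n = none} N) (k : ℕ) :
    ∀ᶠ y in 𝓝[>] x, signAt y k = strAppend (signExp x) oneOverOmega k := by
  have hlen := strLength_signExp_of_isLeast hN
  rcases lt_or_ge k N with hk | hk
  · rw [strAppend_apply_of_lt (hlen ▸ Nat.cast_lt.2 hk), signExp_natCast]
    exact nhdsWithin_le_nhds
      (eventually_signAt_eq fun i hi h => (hi.trans_lt hk).not_ge (hN.2 h))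
  obtain ⟨j, rfl⟩ := Nat.exists_eq_add_of_le hk
  have happ : strAppend (signExp x) oneOverOmega ((N + j : ℕ) : Ordinal) = oneOverOmega j := by
    rw [Nat.cast_add, ← hlen, strAppend_apply_add]
  rw [happ]
  rcases j with _ | j
  · filter_upwards [nhdsWithin_le_nhds (eventually_signAt_eq_some_iff_of_isLeast hN),
      self_mem_nhdsWithin] with y hy (hxy : x < y)
    rw [Nat.cast_zero, oneOverOmega_zero, Nat.add_zero]
    exact hy.1.2 hxy
  · obtain ⟨st, -, hlt, hev⟩ := exists_eventually_signState_nhdsGT hN j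
    filter_upwards [hev, nhdsWithin_le_nhds (eventually_lt_nhds hlt)] with y hy hyc
    rw [oneOverOmega_natCast_succ, ← add_assoc, signAt_eq_some_false_iff, hy]
    exact hyc

end SignExpansionNhds

section Negation

variable {x : ℝ} {N : ℕ}

theorem cand_neg_swap (st : Option ℝ × Option ℝ) :
    cand (st.2.map Neg.neg, st.1.map Neg.neg) = -cand st := by
  rcases st with ⟨_ | l, _ | u⟩ <;> simp only [cand, Option.map] <;> ring

theorem signState_neg (y : ℝ) (n : ℕ) :
    signState (-y) n = ((signState y n).2.map Neg.neg, (signState y n).1.map Neg.neg) := by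
  induction n with
  | zero => rfl
  | succ n ih =>
    rcases lt_trichotomy (cand (signState y n)) y with h | h | h
    · have h' : -y < cand (signState (-y) n) := by rw [ih, cand_neg_swap]; linarith
      rw [signState_succ_of_lt_cand h', signState_succ_of_cand_lt h, ih, cand_neg_swap]
      rfl
    · have h' : cand (signState (-y) n) = -y := by rw [ih, cand_neg_swap, h]
      rw [signState_succ_of_cand_eq h', signState_succ_of_cand_eq h, ih]
    · have h' : cand (signState (-y) n) < -y := by rw [ih, cand_neg_swap]; linarith
      rw [signState_succ_of_cand_lt h', signState_succ_of_lt_cand h, ih, cand_neg_swap]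
      rfl

theorem signAt_neg (y : ℝ) (n : ℕ) : signAt (-y) n = (signAt y n).map not := by
  simp only [signAt, signState_neg, cand_neg_swap, neg_lt_neg_iff]
  split_ifs <;> first | rfl | exact (lt_asymm ‹_› ‹_›).elim

theorem signExp_neg (y : ℝ) : signExp (-y) = fun γ => (signExp y γ).map not := by
  funext γ
  simp only [signExp]
  split_ifs <;> simp [signAt_neg]

theorem eventually_signAt_nhdsLT (hN : IsLeast {n | signAt x n = none} N) (k : ℕ) :
    ∀ᶠ y in 𝓝[<] x, signAt y k = strAppend (signExp x) negOneOverOmega k := by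
  have hN' : IsLeast {n | signAt (-x) n = none} N := by
    simpa only [signAt_neg, Option.map_eq_none_iff]
  have hx : signExp x = fun γ => (signExp (-x) γ).map not := by
    simpa only [neg_neg] using signExp_neg (-x)
  filter_upwards [tendsto_neg_nhdsLT.eventually (eventually_signAt_nhdsGT hN' k)] with y hy
  rw [hx, negOneOverOmega_eq_map, strAppend_map, ← hy, ← neg_neg y, signAt_neg, neg_neg]

end Negation

section SlimSignExp

variable {r : ℕ → ℝ} {x : ℝ} {N : ℕ} {F : Filter ℝ} {b : SignStr}

theorem slim_signExp_apply_of_lt_omega0 (hr : Tendsto r atTop F) {γ : Ordinal} (hγ : γ < ω)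
    (h : ∀ k : ℕ, (k : Ordinal) ≤ γ → ∀ᶠ y in F, signAt y k = b k) (hb : ∀ β ≤ γ, b β ≠ none) :
    slim (fun n => signExp (r n)) γ = b γ := by
  obtain ⟨m, rfl⟩ := Ordinal.lt_omega0.1 hγ
  refine slim_apply_of_eventually ?_ hb
  filter_upwards [(Set.finite_Iic m).eventually_all.2 fun k hk =>
    hr.eventually (h k (Nat.cast_le.2 hk))] with n hn β hβ
  obtain ⟨k, rfl⟩ := Ordinal.lt_omega0.1 (hβ.trans_lt hγ)
  rw [signExp_natCast]
  exact hn k (Nat.cast_le.1 hβ)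

theorem slim_signExp_of_omega0_le {γ : Ordinal} (hγ : ω ≤ γ) :
    slim (fun n => signExp (r n)) γ = none :=
  slim_apply_eq_none le_rfl fun v h => by simpa [signExp_of_omega0_le hγ] using h.exists

theorem slim_signExp_eq_of_tendsto (hr : Tendsto r atTop F)
    (h : ∀ k : ℕ, ∀ᶠ y in F, signAt y k = b k) (hb : ∀ γ < ω, b γ ≠ none)
    (hω : ∀ γ, ω ≤ γ → b γ = none) : slim (fun n => signExp (r n)) = b := by
  funext γ
  rcases lt_or_ge γ ω with hγ | hγ
  · exact slim_signExp_apply_of_lt_omega0 hr hγ (fun k _ => h k)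
      fun β hβ => hb β (hβ.trans_lt hγ)
  · rw [slim_signExp_of_omega0_le hγ, hω γ hγ]

theorem slim_signExp_of_forall_signAt_ne_none (hr : Tendsto r atTop (𝓝 x))
    (hx : ∀ n, signAt x n ≠ none) : slim (fun n => signExp (r n)) = signExp x := by
  refine slim_signExp_eq_of_tendsto hr (fun k => ?_) (fun γ hγ => ?_)
    fun _ => signExp_of_omega0_le
  · rw [signExp_natCast]
    exact eventually_signAt_eq fun i _ => hx i
  · obtain ⟨k, rfl⟩ := Ordinal.lt_omega0.1 hγ
    rw [signExp_natCast]
    exact hx k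

theorem slim_signExp_eq_strAppend (hr : Tendsto r atTop F)
    (hN : IsLeast {n | signAt x n = none} N) {t : SignStr}
    (h : ∀ k : ℕ, ∀ᶠ y in F, signAt y k = strAppend (signExp x) t k)
    (ht : ∀ γ < ω, t γ ≠ none) (htω : ∀ γ, ω ≤ γ → t γ = none) :
    slim (fun n => signExp (r n)) = strAppend (signExp x) t := by
  have hfin : strLength (signExp x) < ω :=
    strLength_signExp_of_isLeast hN ▸ Ordinal.natCast_lt_omega0 N
  refine slim_signExp_eq_of_tendsto hr h (fun γ hγ => ?_) fun γ hγ => ?_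
  · exact strAppend_apply_ne_none (ht _ ((Ordinal.sub_le_self _ _).trans_lt hγ))
  · rw [strAppend_apply_of_omega0_le hfin hγ, htω γ hγ]

theorem slim_signExp_of_tendsto_nhdsGT (hr : Tendsto r atTop (𝓝[>] x))
    (hN : IsLeast {n | signAt x n = none} N) :
    slim (fun n => signExp (r n)) = strAppend (signExp x) oneOverOmega :=
  slim_signExp_eq_strAppend hr hN (eventually_signAt_nhdsGT hN) (fun _ => oneOverOmega_ne_none)
    fun _ => oneOverOmega_of_omega0_le

theorem slim_signExp_of_tendsto_nhdsLT (hr : Tendsto r atTop (𝓝[<] x))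
    (hN : IsLeast {n | signAt x n = none} N) :
    slim (fun n => signExp (r n)) = strAppend (signExp x) negOneOverOmega :=
  slim_signExp_eq_strAppend hr hN (eventually_signAt_nhdsLT hN)
    (fun _ => negOneOverOmega_ne_none) fun _ => negOneOverOmega_of_omega0_le

theorem slim_signExp_of_frequently (hr : Tendsto r atTop (𝓝 x))
    (hN : IsLeast {n | signAt x n = none} N) (hle : ∃ᶠ n in atTop, r n ≤ x)
    (hge : ∃ᶠ n in atTop, x ≤ r n) : slim (fun n => signExp (r n)) = signExp x := by
  funext γ
  rcases lt_or_ge γ N with hγ | hγ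
  · have hpre {k : ℕ} (hk : (k : Ordinal) ≤ γ) : signAt x k ≠ none := fun h =>
      (hk.trans_lt hγ).not_ge (Nat.cast_le.2 (hN.2 h))
    refine slim_signExp_apply_of_lt_omega0 hr (hγ.trans (Ordinal.natCast_lt_omega0 N))
      (fun k hk => ?_) fun β hβ => ?_
    · rw [signExp_natCast]
      exact eventually_signAt_eq fun i hi => hpre ((Nat.cast_le.2 hi).trans hk)
    · obtain ⟨k, rfl⟩ :=
        Ordinal.lt_omega0.1 ((hβ.trans_lt hγ).trans (Ordinal.natCast_lt_omega0 N))
      rw [signExp_natCast]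
      exact hpre hβ
  · rw [signExp_eq_none_of_le hN.1 hγ]
    refine slim_apply_eq_none hγ fun v hv => ?_
    have hsign := hr.eventually (eventually_signAt_eq_some_iff_of_isLeast hN)
    simp only [signExp_natCast] at hv
    cases v
    · obtain ⟨n, hxn, hn, hv⟩ := (hge.and_eventually (hsign.and hv)).exists
      exact (hn.2.1 hv).not_ge hxn
    · obtain ⟨n, hnx, hn, hv⟩ := (hle.and_eventually (hsign.and hv)).exists
      exact (hn.1.1 hv).not_ge hnx

end SlimSignExp

open Filter Topology in
/-- If a sequence of reals converges classically to a real `x`, then the s-limit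
of the sign expansions of the `r n` equals the sign expansion of `x + ε` for some
`ε ∈ {0, 1/ω, -1/ω}`; here the expansion of `x + 1/ω` (resp. `x - 1/ω`) is the expansion of
`x` followed by `+---⋯` (resp. `-+++⋯`). -/
theorem slim_signExp_of_tendsto (r : ℕ → ℝ) (x : ℝ)
    (hconv : Tendsto r atTop (𝓝 x)) :
    slim (fun n => signExp (r n)) = signExp x ∨
    slim (fun n => signExp (r n)) = strAppend (signExp x) oneOverOmega ∨
    slim (fun n => signExp (r n)) = strAppend (signExp x) negOneOverOmega := by
  by_cases hfin : ∃ N, signAt x N = none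
  · obtain ⟨N, hN⟩ : ∃ N, IsLeast {n | signAt x n = none} N := ⟨_, Nat.isLeast_find hfin⟩
    by_cases hup : ∀ᶠ n in atTop, x < r n
    · exact .inr <| .inl <|
        slim_signExp_of_tendsto_nhdsGT (tendsto_nhdsWithin_iff.2 ⟨hconv, hup⟩) hN
    by_cases hdown : ∀ᶠ n in atTop, r n < x
    · exact .inr <| .inr <|
        slim_signExp_of_tendsto_nhdsLT (tendsto_nhdsWithin_iff.2 ⟨hconv, hdown⟩) hN
    simp only [not_eventually, not_lt] at hup hdown
    exact .inl <| slim_signExp_of_frequently hconv hN hup hdown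
  · exact .inl <| slim_signExp_of_forall_signAt_ne_none hconv (not_exists.1 hfin)
end

section
/- If a sequence of real numbers (r_n) converges classically to a real number r that is not a dyadic rational, then the s-limit of the sign expansions of the r_n is exactly the sign expansion of r. -/
open scoped Classical

/-!
Every candidate `cand (signState x k)` is dyadic, so for non-dyadic `x` each comparison made while
computing the first `m + 1` signs of `x` is strict. A real `y` closer to `x` than all of these
candidates makes the same comparisons, so the first `m + 1` signs are locally constant near `x`;
hence they are eventually constant and defined along `r n → x`. Beyond `ω` every sign expansion
is empty.
-/

open Filter Topology

section Slim

variable {L M A : Type*} [LinearOrder L] [LinearOrder M] {a : L → M → Option A} {m : M}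

theorem slim_apply_eq_of_forall_ge {b : M → Option A} (hb : ∀ m' ≤ m, (b m').isSome) (l₀ : L)
    (ha : ∀ l ≥ l₀, ∀ m' ≤ m, a l m' = b m') : slim a m = b m := by
  have hstable : ∃ l₀ : L, ∀ m' ≤ m, ∀ l, l₀ ≤ l → ∀ l', l₀ ≤ l' →
      a l m' = a l' m' ∧ (a l m').isSome :=
    ⟨l₀, fun m' hm' l hl l' hl' => by rw [ha l hl m' hm', ha l' hl' m' hm']; exact ⟨rfl, hb m' hm'⟩⟩
  rw [slim, dif_pos hstable]
  have hchoose := hstable.choose_spec m le_rfl _ le_rfl (max hstable.choose l₀) (le_max_left _ _)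
  rw [hchoose.1, ha _ (le_max_right _ _) m le_rfl]

theorem slim_apply_eq_none_s2 (ha : ∀ l, a l m = none) : slim a m = none := by
  rw [slim, dif_neg]
  rintro ⟨l₀, h⟩
  simpa [ha] using (h m le_rfl l₀ le_rfl l₀ le_rfl).2

end Slim

section Dyadic

theorem isDyadic_zero : IsDyadic 0 := ⟨0, 0, by norm_num⟩

theorem IsDyadic.add_one {x : ℝ} (h : IsDyadic x) : IsDyadic (x + 1) := by
  obtain ⟨k, m, rfl⟩ := h
  exact ⟨k + 2 ^ m, m, by push_cast; field_simp⟩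

theorem IsDyadic.sub_one {x : ℝ} (h : IsDyadic x) : IsDyadic (x - 1) := by
  obtain ⟨k, m, rfl⟩ := h
  exact ⟨k - 2 ^ m, m, by push_cast; field_simp⟩

theorem IsDyadic.add_div_two {x y : ℝ} (hx : IsDyadic x) (hy : IsDyadic y) :
    IsDyadic ((x + y) / 2) := by
  obtain ⟨k, m, rfl⟩ := hx
  obtain ⟨j, p, rfl⟩ := hy
  refine ⟨k * 2 ^ p + j * 2 ^ m, m + p + 1, ?_⟩
  push_cast
  rw [pow_succ, pow_add]
  field_simp

theorem isDyadic_cand {st : Option ℝ × Option ℝ} (h₁ : ∀ l ∈ st.1, IsDyadic l)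
    (h₂ : ∀ u ∈ st.2, IsDyadic u) : IsDyadic (cand st) := by
  match st with
  | (none, none) => exact isDyadic_zero
  | (some l, none) => exact (h₁ l rfl).add_one
  | (none, some u) => exact (h₂ u rfl).sub_one
  | (some l, some u) => exact (h₁ l rfl).add_div_two (h₂ u rfl)

theorem isDyadic_signState (x : ℝ) (n : ℕ) :
    (∀ l ∈ (signState x n).1, IsDyadic l) ∧ (∀ u ∈ (signState x n).2, IsDyadic u) := by
  induction n with
  | zero => simp [signState]
  | succ n ih =>
    have hc := isDyadic_cand ih.1 ih.2
    simp only [signState]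
    split_ifs
    · exact ⟨fun l hl => Option.some_inj.1 hl ▸ hc, ih.2⟩
    · exact ⟨ih.1, fun u hu => Option.some_inj.1 hu ▸ hc⟩
    · exact ih

theorem cand_signState_ne {x : ℝ} (hx : ¬IsDyadic x) (n : ℕ) : cand (signState x n) ≠ x :=
  fun h => hx (h ▸ isDyadic_cand (isDyadic_signState x n).1 (isDyadic_signState x n).2)

end Dyadic

section Continuity

theorem lt_iff_lt_and_lt_iff_lt_of_abs_sub_lt {K : Type*} [Field K] [LinearOrder K]
    [IsStrictOrderedRing K] {c x y : K} (h : |y - x| < |c - x|) :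
    (c < y ↔ c < x) ∧ (y < c ↔ x < c) := by
  obtain ⟨hyx₁, hyx₂⟩ := abs_lt.1 h
  rcases le_total c x with hcx | hcx
  · rw [abs_of_nonpos (sub_nonpos.2 hcx)] at hyx₁ hyx₂
    constructor <;> constructor <;> intro <;> linarith
  · rw [abs_of_nonneg (sub_nonneg.2 hcx)] at hyx₁ hyx₂
    constructor <;> constructor <;> intro <;> linarith

variable {x y : ℝ}

theorem signState_eq_of_forall_lt {n : ℕ} (h : ∀ k < n, |y - x| < |cand (signState x k) - x|) :
    signState y n = signState x n := by
  induction n with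
  | zero => rfl
  | succ n ih =>
    have hst := ih fun k hk => h k (hk.trans n.lt_succ_self)
    obtain ⟨hlt, hgt⟩ := lt_iff_lt_and_lt_iff_lt_of_abs_sub_lt (h n n.lt_succ_self)
    simp only [signState, hst, hlt, hgt]

theorem signAt_eq_of_forall_le {n : ℕ} (h : ∀ k ≤ n, |y - x| < |cand (signState x k) - x|) :
    signAt y n = signAt x n := by
  have hst := signState_eq_of_forall_lt fun k hk => h k hk.le
  obtain ⟨hlt, hgt⟩ := lt_iff_lt_and_lt_iff_lt_of_abs_sub_lt (h n le_rfl)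
  simp only [signAt, hst, hlt, hgt]

theorem eventually_nhds_signAt_eq (hx : ¬IsDyadic x) (m : ℕ) :
    ∀ᶠ y in 𝓝 x, ∀ k ≤ m, signAt y k = signAt x k := by
  have hclose : ∀ᶠ y in 𝓝 x, ∀ k ∈ Set.Iic m, |y - x| < |cand (signState x k) - x| :=
    (eventually_all_finite (Set.finite_Iic m)).2 fun k _ =>
      Metric.ball_mem_nhds x (abs_pos.2 (sub_ne_zero.2 (cand_signState_ne hx k)))
  filter_upwards [hclose] with y hy k hk
  exact signAt_eq_of_forall_le fun j hj => hy j (hj.trans hk)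

end Continuity

section SignExp

theorem signExp_natCast_s2 (x : ℝ) (k : ℕ) : signExp x k = signAt x k := by
  have h : ∃ n : ℕ, (k : Ordinal) = n := ⟨k, rfl⟩
  rw [signExp, dif_pos h]
  exact congrArg _ (Nat.cast_injective h.choose_spec).symm

theorem signExp_of_omega0_le_s2 (x : ℝ) {γ : Ordinal} (hγ : Ordinal.omega0 ≤ γ) :
    signExp x γ = none := by
  refine dif_neg ?_
  rintro ⟨n, rfl⟩
  exact hγ.not_gt (Ordinal.natCast_lt_omega0 n)

theorem signExp_isSome {x : ℝ} (hx : ¬IsDyadic x) {γ : Ordinal} (hγ : γ < Ordinal.omega0) :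
    (signExp x γ).isSome := by
  obtain ⟨k, rfl⟩ := Ordinal.lt_omega0.1 hγ
  rw [signExp_natCast_s2, signAt]
  rcases (cand_signState_ne hx k).lt_or_gt with h | h <;> simp [h, h.not_gt]

theorem eventually_nhds_signExp_eq {x : ℝ} (hx : ¬IsDyadic x) {γ : Ordinal}
    (hγ : γ < Ordinal.omega0) : ∀ᶠ y in 𝓝 x, ∀ β ≤ γ, signExp y β = signExp x β := by
  obtain ⟨m, rfl⟩ := Ordinal.lt_omega0.1 hγ
  filter_upwards [eventually_nhds_signAt_eq hx m] with y hy β hβ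
  obtain ⟨k, rfl⟩ := Ordinal.lt_omega0.1 (hβ.trans_lt hγ)
  rw [signExp_natCast_s2, signExp_natCast_s2, hy k (by exact_mod_cast hβ)]

end SignExp

open Filter Topology in
/-- If a sequence of reals converges classically to a real `x` that is not a
dyadic rational, then the s-limit of the sign expansions is exactly the sign expansion of `x`. -/
theorem slim_signExp_of_tendsto_of_not_dyadic (r : ℕ → ℝ) (x : ℝ)
    (hconv : Tendsto r atTop (𝓝 x)) (hx : ¬ IsDyadic x) :
    slim (fun n => signExp (r n)) = signExp x := by
  funext γ
  rcases lt_or_ge γ Ordinal.omega0 with hγ | hγ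
  · obtain ⟨N, hN⟩ := eventually_atTop.1 (hconv.eventually (eventually_nhds_signExp_eq hx hγ))
    exact slim_apply_eq_of_forall_ge (fun β hβ => signExp_isSome hx (hβ.trans_lt hγ)) N hN
  · rw [signExp_of_omega0_le_s2 x hγ]
    exact slim_apply_eq_none_s2 fun n => signExp_of_omega0_le_s2 (r n) hγ
end

section
/- If (s_β)_{β<α} and (t_ζ)_{ζ<η} are nondecreasing ordinal-indexed sequences of surreals that are chained (for every β there is ζ with s_β ≤ t_ζ and for every ζ there is β with t_ζ ≤ s_β), then they have the same s-limit. -/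
open scoped Classical

/-! If `s` stabilizes on the initial segment `[0, m]` from index `β₀` on, then every late enough
`t ζ` is squeezed between `s β₀` and some `s β` with `β ≥ β₀`. Two sign expansions that agree on
`[0, m]` force everything between them to agree with them there, so `t` stabilizes on `[0, m]` to
the same values; by symmetry the two s-limits coincide. -/

open Set

section SignStrOrder

def StrLTAt (a b : SignStr) (γ : Ordinal) : Prop :=
  (∀ β < γ, a β = b β) ∧ signVal (a γ) < signVal (b γ)

variable {a b c : SignStr} {γ m : Ordinal}

lemma StrLTAt.ne (h : StrLTAt a b γ) : a γ ≠ b γ := fun heq => (heq ▸ h.2).false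

lemma StrLTAt.exists_le_of_strLE (hab : StrLTAt a b γ) (hbc : strLE b c) :
    ∃ δ ≤ γ, StrLTAt a c δ := by
  obtain rfl | ⟨γ', hbc⟩ := hbc
  · exact ⟨γ, le_rfl, hab⟩
  rcases lt_trichotomy γ γ' with hlt | rfl | hgt
  · exact ⟨γ, le_rfl, fun β hβ => (hab.1 β hβ).trans (hbc.1 β (hβ.trans hlt)),
      hbc.1 γ hlt ▸ hab.2⟩
  · exact ⟨γ, le_rfl, fun β hβ => (hab.1 β hβ).trans (hbc.1 β hβ), hab.2.trans hbc.2⟩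
  · exact ⟨γ', hgt.le, fun β hβ => (hab.1 β (hβ.trans hgt)).trans (hbc.1 β hβ),
      (hab.1 γ' hgt).symm ▸ hbc.2⟩

lemma strLE_trans (hab : strLE a b) (hbc : strLE b c) : strLE a c := by
  obtain rfl | ⟨γ, hab⟩ := hab
  · exact hbc
  obtain ⟨δ, -, hac⟩ := StrLTAt.exists_le_of_strLE hab hbc
  exact Or.inr ⟨δ, hac⟩

/-- A first difference between `a` and `b` inside `[0, m]` would survive in `c`. -/
lemma eqOn_Iic_of_strLE_of_strLE (hab : strLE a b) (hbc : strLE b c)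
    (hac : EqOn a c (Iic m)) : EqOn b a (Iic m) := by
  obtain rfl | ⟨γ, hab⟩ := hab
  · exact eqOn_refl _ _
  obtain ⟨δ, hδγ, hac'⟩ := StrLTAt.exists_le_of_strLE hab hbc
  have hmγ : m < γ := lt_of_not_ge fun hγm => hac'.ne (hac (mem_Iic.2 (hδγ.trans hγm)))
  exact fun m' hm' => (hab.1 m' (lt_of_le_of_lt hm' hmγ)).symm

end SignStrOrder

section Slim

def StabilizesFrom {L M A : Type*} [LE L] [LE M] (a : L → M → Option A) (l₀ : L) (m : M) :
    Prop :=
  ∀ m' ≤ m, ∀ l, l₀ ≤ l → ∀ l', l₀ ≤ l' → a l m' = a l' m' ∧ (a l m').isSome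

variable {L K M A : Type*}

lemma StabilizesFrom.eqOn_Iic [Preorder L] [Preorder M] {a : L → M → Option A} {l₀ l : L}
    {m : M} (h : StabilizesFrom a l₀ m) (hl : l₀ ≤ l) : EqOn (a l) (a l₀) (Iic m) :=
  fun _ hm' => (h _ hm' l hl l₀ le_rfl).1

lemma StabilizesFrom.of_eventually_eqOn [Preorder L] [LE K] [Preorder M]
    {a : L → M → Option A} {b : K → M → Option A} {l₀ : L} {k₀ : K} {m : M}
    (h : StabilizesFrom a l₀ m) (hb : ∀ k, k₀ ≤ k → EqOn (b k) (a l₀) (Iic m)) :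
    StabilizesFrom b k₀ m := fun _ hm' k hk k' hk' =>
  ⟨(hb k hk hm').trans (hb k' hk' hm').symm,
    (hb k hk hm').symm ▸ (h _ hm' l₀ le_rfl l₀ le_rfl).2⟩

lemma slim_eq_of_stabilizesFrom [LinearOrder L] [LinearOrder M] {a : L → M → Option A}
    {l₀ : L} {m : M} (h : StabilizesFrom a l₀ m) : slim a m = a l₀ m := by
  have hex : ∃ l, StabilizesFrom a l m := ⟨l₀, h⟩
  refine (dif_pos hex).trans ?_
  have hl₁ := hex.choose_spec
  exact (hl₁.eqOn_Iic (le_max_left _ l₀) self_mem_Iic).symm.trans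
    (h.eqOn_Iic (le_max_right _ _) self_mem_Iic)

lemma slim_eq_none [LinearOrder L] [LinearOrder M] {a : L → M → Option A} {m : M}
    (h : ¬ ∃ l, StabilizesFrom a l m) : slim a m = none :=
  dif_neg h

end Slim

section Chained

variable {α η : Ordinal} {s t : Ordinal → SignStr}
  (hsmono : ∀ β γ, β ≤ γ → γ < α → strLE (s β) (s γ))
  (htmono : ∀ ζ ξ, ζ ≤ ξ → ξ < η → strLE (t ζ) (t ξ))
  (hchain₁ : ∀ β < α, ∃ ζ < η, strLE (s β) (t ζ))
  (hchain₂ : ∀ ζ < η, ∃ β < α, strLE (t ζ) (s β))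
include hsmono htmono hchain₁ hchain₂

lemma eventually_eqOn_Iic_of_chained {β₀ m : Ordinal} (hβ₀ : β₀ < α)
    (hs : ∀ β, β₀ ≤ β → β < α → EqOn (s β) (s β₀) (Iic m)) :
    ∃ ζ₀ < η, ∀ ζ, ζ₀ ≤ ζ → ζ < η → EqOn (t ζ) (s β₀) (Iic m) := by
  obtain ⟨ζ₀, hζ₀, hs_le_t⟩ := hchain₁ β₀ hβ₀
  refine ⟨ζ₀, hζ₀, fun ζ hζ₀ζ hζ => ?_⟩
  obtain ⟨β, hβ, ht_le_s⟩ := hchain₂ ζ hζ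
  have hβ' : max β β₀ < α := max_lt hβ hβ₀
  exact eqOn_Iic_of_strLE_of_strLE (strLE_trans hs_le_t (htmono ζ₀ ζ hζ₀ζ hζ))
    (strLE_trans ht_le_s (hsmono β _ (le_max_left _ _) hβ'))
    (hs _ (le_max_right _ _) hβ').symm

lemma StabilizesFrom.exists_of_chained {β₀ : Iio α} {m : Ordinal}
    (h : StabilizesFrom (fun β : Iio α => s β) β₀ m) :
    ∃ ζ₀ : Iio η, StabilizesFrom (fun ζ : Iio η => t ζ) ζ₀ m ∧ t ζ₀ m = s β₀ m := by
  obtain ⟨ζ₀, hζ₀, ht⟩ := eventually_eqOn_Iic_of_chained hsmono htmono hchain₁ hchain₂ β₀.2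
    fun β hβ₀β hβ => h.eqOn_Iic (l := ⟨β, hβ⟩) hβ₀β
  exact ⟨⟨ζ₀, hζ₀⟩, h.of_eventually_eqOn fun ζ hζ => ht ζ hζ ζ.2,
    ht ζ₀ le_rfl hζ₀ self_mem_Iic⟩

end Chained

theorem slimIio_eq_of_chained_general (α η : Ordinal) (s t : Ordinal → SignStr)
    (hsmono : ∀ β γ, β ≤ γ → γ < α → strLE (s β) (s γ))
    (htmono : ∀ ζ ξ, ζ ≤ ξ → ξ < η → strLE (t ζ) (t ξ))
    (hchain₁ : ∀ β < α, ∃ ζ < η, strLE (s β) (t ζ))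
    (hchain₂ : ∀ ζ < η, ∃ β < α, strLE (t ζ) (s β)) :
    slimIio α s = slimIio η t := by
  funext m
  by_cases hs : ∃ β₀, StabilizesFrom (fun β : Iio α => s β) β₀ m
  · obtain ⟨β₀, hβ₀⟩ := hs
    obtain ⟨ζ₀, hζ₀, heq⟩ := hβ₀.exists_of_chained hsmono htmono hchain₁ hchain₂
    rw [slimIio, slimIio, slim_eq_of_stabilizesFrom hβ₀, slim_eq_of_stabilizesFrom hζ₀, heq]
  · have ht : ¬ ∃ ζ₀, StabilizesFrom (fun ζ : Iio η => t ζ) ζ₀ m := fun ⟨_, hζ₀⟩ =>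
      let ⟨β₀, hβ₀, _⟩ := hζ₀.exists_of_chained htmono hsmono hchain₂ hchain₁
      hs ⟨β₀, hβ₀⟩
    rw [slimIio, slimIio, slim_eq_none hs, slim_eq_none ht]

/-- If `(s β)_{β<α}` and `(t ζ)_{ζ<η}` are nondecreasing ordinal-indexed sequences
of surreals that are chained (each element of either sequence is `≤` some element of the other),
then they have the same s-limit. -/
theorem slimIio_eq_of_chained (α η : Ordinal) (s t : Ordinal → SignStr)
    (hsstr : ∀ β < α, IsLowerSet {γ | (s β γ).isSome})
    (htstr : ∀ ζ < η, IsLowerSet {γ | (t ζ γ).isSome})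
    (hsmono : ∀ β γ, β ≤ γ → γ < α → strLE (s β) (s γ))
    (htmono : ∀ ζ ξ, ζ ≤ ξ → ξ < η → strLE (t ζ) (t ξ))
    (hchain₁ : ∀ β < α, ∃ ζ < η, strLE (s β) (t ζ))
    (hchain₂ : ∀ ζ < η, ∃ β < α, strLE (t ζ) (s β)) :
    slimIio α s = slimIio η t :=
  slimIio_eq_of_chained_general α η s t hsmono htmono hchain₁ hchain₂
end

section
/- Monotonicity can fail for s-limits: there exist ω-sequences of surreals (a_n) and (b_n) with a_n < b_n for every n < ω, but slim a_n > slim b_n. (Witness: a_n = n and b_n = ω − 1.) -/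
open scoped Classical

/-!
The s-limit of the integers `n` is `ω`, whose sign expansion is `ω` pluses. The constant
sequence `ω − 1` has s-limit `ω − 1`, which is `ω` pluses followed by a minus. Each `n` lies
below `ω − 1`, since `n` ends where `ω − 1` still has a plus, while `ω − 1 < ω` because at
position `ω` the minus of `ω − 1` meets the end of `ω`.
-/

open Ordinal

section Slim

variable {L M A : Type*} [LinearOrder L] [LinearOrder M]

theorem slim_eq_of_eventually_eq {a : L → M → Option A} {t : M → Option A} {m : M}
    (h : ∃ l₀, ∀ l ≥ l₀, ∀ m' ≤ m, a l m' = t m') (ht : ∀ m' ≤ m, (t m').isSome) :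
    slim a m = t m := by
  obtain ⟨l₀, hl₀⟩ := h
  have hcond : ∃ l₀ : L, ∀ m' ≤ m, ∀ l, l₀ ≤ l → ∀ l', l₀ ≤ l' →
      a l m' = a l' m' ∧ (a l m').isSome := by
    refine ⟨l₀, fun m' hm' l hl l' hl' => ?_⟩
    rw [hl₀ l hl m' hm', hl₀ l' hl' m' hm']
    exact ⟨rfl, ht m' hm'⟩
  rw [slim, dif_pos hcond]
  set c := hcond.choose
  calc a c m = a (max c l₀) m := (hcond.choose_spec m le_rfl c le_rfl _ (le_max_left _ _)).1
    _ = t m := hl₀ _ (le_max_right _ _) m le_rfl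

theorem slim_eq_none_of_forall_eq_none {a : L → M → Option A} {m m' : M} (hm' : m' ≤ m)
    (h : ∀ l, a l m' = none) : slim a m = none := by
  rw [slim, dif_neg]
  rintro ⟨l₀, hl₀⟩
  simpa [h] using (hl₀ m' hm' l₀ le_rfl l₀ le_rfl).2

theorem slim_const [Nonempty L] {s : M → Option A}
    (hs : ∀ m, (s m).isSome → ∀ m' ≤ m, (s m').isSome) :
    slim (fun _ : L => s) = s := by
  funext m
  by_cases hm : (s m).isSome
  · exact slim_eq_of_eventually_eq ⟨Classical.arbitrary L, fun _ _ _ _ => rfl⟩ (hs m hm)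
  · rw [Option.not_isSome_iff_eq_none] at hm
    rw [hm]
    exact slim_eq_none_of_forall_eq_none le_rfl fun _ => hm

end Slim

theorem slim_ordStr_natCast : slim (fun n : ℕ => ordStr n) = ordStr ω := by
  funext m
  by_cases hm : m < ω
  · obtain ⟨k, rfl⟩ := lt_omega0.1 hm
    refine slim_eq_of_eventually_eq ⟨k + 1, fun l hl m' hm' => ?_⟩ fun m' hm' => ?_
    · have hm'l : m' < l := hm'.trans_lt (by exact_mod_cast Nat.lt_of_succ_le hl)
      simp [ordStr, hm'l, hm'.trans_lt hm]
    · simp [ordStr, hm'.trans_lt hm]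
  · have hnone : ∀ α : Ordinal, α ≤ ω → ordStr α m = none := fun α hα =>
      if_neg fun hmα => hm (hmα.trans_le hα)
    rw [hnone ω le_rfl]
    exact slim_eq_none_of_forall_eq_none le_rfl fun n => hnone n (natCast_lt_omega0 n).le

noncomputable def omegaSubOne : SignStr := fun γ =>
  if γ < ω then some true else if γ = ω then some false else none

theorem omegaSubOne_isSome_iff {γ : Ordinal} : (omegaSubOne γ).isSome ↔ γ ≤ ω := by
  rcases lt_trichotomy γ ω with h | rfl | h
  · simp [omegaSubOne, h, h.le]
  · simp [omegaSubOne]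
  · simp [omegaSubOne, h.not_gt, h.ne', h.not_ge]

theorem slim_const_omegaSubOne : slim (fun _ : ℕ => omegaSubOne) = omegaSubOne :=
  slim_const fun _ hm _ hm' => omegaSubOne_isSome_iff.2 (hm'.trans (omegaSubOne_isSome_iff.1 hm))

theorem ordStr_lt_omegaSubOne {α : Ordinal} (hα : α < ω) : strLT (ordStr α) omegaSubOne :=
  ⟨α, fun β hβ => by simp [ordStr, omegaSubOne, hβ, hβ.trans hα], by
    simp [ordStr, omegaSubOne, hα, signVal]⟩

theorem omegaSubOne_lt_ordStr_omega : strLT omegaSubOne (ordStr ω) :=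
  ⟨ω, fun β hβ => by simp [ordStr, omegaSubOne, hβ], by simp [ordStr, omegaSubOne, signVal]⟩

/-- Monotonicity can fail for s-limits: there are ω-sequences of surreals
`(a n)`, `(b n)` with `a n < b n` for every `n`, but `slim b < slim a`.
(Witness: `a n = n` and `b n = ω - 1`.) -/
theorem exists_slim_not_monotone :
    ∃ a b : ℕ → SignStr, (∀ n, strLT (a n) (b n)) ∧ strLT (slim b) (slim a) := by
  refine ⟨fun n => ordStr n, fun _ => omegaSubOne,
    fun n => ordStr_lt_omegaSubOne (natCast_lt_omega0 n), ?_⟩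
  rw [slim_const_omegaSubOne, slim_ordStr_natCast]
  exact omegaSubOne_lt_ordStr_omega
end
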